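/- If a permutation class C contains no horizontal alternation of size ℓ, then for every π ∈ C, every interval I of positions, and the set S_I of points of π with x-coordinate in I, the intervalicity of the y-projection of S_I is at most 2ℓ − 1. -/

import Mathlib

namespace PPM

noncomputable section

/-- Intervalicity: minimum number of pairwise disjoint integer intervals covering `A`. -/
def intervalicity {n : ℕ} (A : Finset (Fin n)) : ℕ :=
  sInf {m | ∃ F : Finset (Finset (Fin n)), F.card = m ∧
    (∀ I ∈ F, ∃ a b : Fin n, I = Finset.Icc a b) ∧
    (F : Set (Finset (Fin n))).PairwiseDisjoint id ∧
    F.sup id = A}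

/-- Grid-complexity of a point set. -/
def gridComplexity {n : ℕ} (S : Finset (Fin n × Fin n)) : ℕ :=
  max (intervalicity (S.image Prod.fst)) (intervalicity (S.image Prod.snd))

/-- The diagram of a permutation. -/
def diagram {n : ℕ} (π : Equiv.Perm (Fin n)) : Finset (Fin n × Fin n) :=
  Finset.univ.image (fun i => (i, π i))

/-- Rooted binary trees with labeled leaves. -/
inductive GTree (α : Type) where
  | leaf : α → GTree α
  | node : GTree α → GTree α → GTree α

namespace GTree
variable {α : Type}

def leafList : GTree α → List α
  | leaf a => [a]
  | node l r => l.leafList ++ r.leafList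

def subtrees : GTree α → List (GTree α)
  | leaf a => [leaf a]
  | node l r => node l r :: (l.subtrees ++ r.subtrees)

def IsCaterpillar : GTree α → Prop
  | leaf _ => True
  | node l r => ((∃ a, l = leaf a) ∨ (∃ a, r = leaf a)) ∧ IsCaterpillar l ∧ IsCaterpillar r

def leafDepth [DecidableEq α] : GTree α → α → ℕ
  | leaf _, _ => 0
  | node l r, a => if a ∈ l.leafList then l.leafDepth a + 1 else r.leafDepth a + 1

end GTree

/-- Grid-width of a grid tree. -/
def treeGW {n : ℕ} (T : GTree (Fin n × Fin n)) : ℕ :=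
  (T.subtrees.map (fun t => gridComplexity t.leafList.toFinset)).foldr max 0

/-- `T` is a grid tree of `π`: its leaves are labeled bijectively by the points of `π`. -/
def IsGridTree {n : ℕ} (π : Equiv.Perm (Fin n)) (T : GTree (Fin n × Fin n)) : Prop :=
  T.leafList.Nodup ∧ T.leafList.toFinset = diagram π

/-- Grid-width of a permutation. -/
def gw {n : ℕ} (π : Equiv.Perm (Fin n)) : ℕ :=
  sInf {w | ∃ T, IsGridTree π T ∧ treeGW T = w}

/-- Path-width of a permutation: minimum over caterpillar grid trees. -/
def pw {n : ℕ} (π : Equiv.Perm (Fin n)) : ℕ :=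
  sInf {w | ∃ T, IsGridTree π T ∧ T.IsCaterpillar ∧ treeGW T = w}

/-- The `i`-th prefix point set of `π` in `σ`-ordering. -/
def prefixSet {n : ℕ} (π σ : Equiv.Perm (Fin n)) (i : Fin n) : Finset (Fin n × Fin n) :=
  (Finset.univ.filter (fun j => j ≤ i)).image (fun j => (σ j, π (σ j)))

/-- Path-width of `π` in `σ`-ordering. -/
def pwOrd {n : ℕ} (π σ : Equiv.Perm (Fin n)) : ℕ :=
  Finset.univ.sup (fun i => gridComplexity (prefixSet π σ i))

/-- Horizontal path-width: `σ` is the identity (left-to-right order). -/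
def hpw {n : ℕ} (π : Equiv.Perm (Fin n)) : ℕ := pwOrd π 1

/-- Vertical path-width: `σ = π⁻¹` (bottom-to-top order). -/
def vpw {n : ℕ} (π : Equiv.Perm (Fin n)) : ℕ := pwOrd π π⁻¹

/-- Pattern containment: `τ` contains `π`. -/
def Contains {n k : ℕ} (τ : Equiv.Perm (Fin n)) (π : Equiv.Perm (Fin k)) : Prop :=
  ∃ f : Fin k → Fin n, StrictMono f ∧ ∀ i j, π i < π j ↔ τ (f i) < τ (f j)

/-- A permutation class, given by its members of each length. -/
abbrev PermClass := ∀ n : ℕ, Set (Equiv.Perm (Fin n))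

/-- Closure under pattern containment. -/
def IsPermClass (C : PermClass) : Prop :=
  ∀ {n k : ℕ} (τ : Equiv.Perm (Fin n)) (π : Equiv.Perm (Fin k)),
    τ ∈ C n → Contains τ π → π ∈ C k

/-- `π` is griddable by the monotone gridding matrix `M`
(`some true` = Inc, `some false` = Dec, `none` = empty);
columns are the first index, rows the second. -/
def MonGriddable {n k l : ℕ} (M : Fin k → Fin l → Option Bool)
    (π : Equiv.Perm (Fin n)) : Prop :=
  ∃ (c : Fin n → Fin k) (r : Fin n → Fin l), Monotone c ∧ Monotone r ∧
    (∀ i : Fin n, (M (c i) (r (π i))).isSome) ∧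
    (∀ i j : Fin n, i < j → c i = c j → r (π i) = r (π j) →
      ∀ b, M (c i) (r (π i)) = some b → (if b then π i < π j else π j < π i))

/-- Adjacency of cells in the cell graph of a monotone gridding matrix:
both cells nonempty, sharing a row or a column, with only empty cells in between. -/
def MonCellAdj {k l : ℕ} (M : Fin k → Fin l → Option Bool)
    (p q : Fin k × Fin l) : Prop :=
  (M p.1 p.2).isSome ∧ (M q.1 q.2).isSome ∧
  ((p.1 = q.1 ∧ p.2 ≠ q.2 ∧ ∀ j : Fin l,
      ((p.2 < j ∧ j < q.2) ∨ (q.2 < j ∧ j < p.2)) → M p.1 j = Option.none) ∨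
   (p.2 = q.2 ∧ p.1 ≠ q.1 ∧ ∀ i : Fin k,
      ((p.1 < i ∧ i < q.1) ∨ (q.1 < i ∧ i < p.1)) → M i p.2 = Option.none))

/-- The cell graph of a monotone gridding matrix. -/
def monCellGraph {k l : ℕ} (M : Fin k → Fin l → Option Bool) :
    SimpleGraph (Fin k × Fin l) :=
  SimpleGraph.fromRel (MonCellAdj M)

/-- A consistent orientation of a monotone gridding matrix, signs coded by `Bool`. -/
def ConsistentOrientation {k l : ℕ} (M : Fin k → Fin l → Option Bool)
    (c : Fin k → Bool) (r : Fin l → Bool) : Prop :=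
  ∀ i j, (M i j = some true → c i = r j) ∧ (M i j = some false → c i ≠ r j)

/-- The refinement `M^{×q}` of a monotone gridding matrix. -/
def refine {k l : ℕ} (M : Fin k → Fin l → Option Bool) (q : ℕ) :
    Fin (q * k) → Fin (q * l) → Option Bool :=
  fun i j =>
    match M ⟨i.val / q, Nat.div_lt_of_lt_mul i.isLt⟩
            ⟨j.val / q, Nat.div_lt_of_lt_mul j.isLt⟩ with
    | some true => if i.val % q = j.val % q then some true else none
    | some false => if i.val % q + j.val % q = q - 1 then some false else none
    | none => none

/-- The restriction of `π` to the position set `P` is order-isomorphic to a member of `C`. -/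
def CellPattern {n : ℕ} (π : Equiv.Perm (Fin n)) (P : Finset (Fin n))
    (C : PermClass) : Prop :=
  ∃ m : ℕ, ∃ σ ∈ C m, ∃ f : Fin m → Fin n, StrictMono f ∧
    Finset.univ.image f = P ∧ ∀ i j, σ i < σ j ↔ π (f i) < π (f j)

/-- `π` is griddable by a gridding matrix with permutation-class entries. -/
def GenGriddable {n k l : ℕ} (M : Fin k → Fin l → PermClass)
    (π : Equiv.Perm (Fin n)) : Prop :=
  ∃ (c : Fin n → Fin k) (r : Fin n → Fin l), Monotone c ∧ Monotone r ∧
    ∀ (a : Fin k) (b : Fin l),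
      (Finset.univ.filter (fun i => c i = a ∧ r (π i) = b) = ∅) ∨
      CellPattern π (Finset.univ.filter (fun i => c i = a ∧ r (π i) = b)) (M a b)

/-- A class containing some nonempty permutation. -/
def ClassNonempty (C : PermClass) : Prop := ∃ n, 0 < n ∧ (C n).Nonempty

/-- An infinite class: members of arbitrarily large lengths. -/
def ClassInfinite (C : PermClass) : Prop := ∀ m, ∃ n, m ≤ n ∧ (C n).Nonempty

/-- Cell adjacency for a general gridding matrix. -/
def GenCellAdj {k l : ℕ} (M : Fin k → Fin l → PermClass)
    (p q : Fin k × Fin l) : Prop :=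
  ClassNonempty (M p.1 p.2) ∧ ClassNonempty (M q.1 q.2) ∧
  ((p.1 = q.1 ∧ p.2 ≠ q.2 ∧ ∀ j : Fin l,
      ((p.2 < j ∧ j < q.2) ∨ (q.2 < j ∧ j < p.2)) → ¬ ClassNonempty (M p.1 j)) ∨
   (p.2 = q.2 ∧ p.1 ≠ q.1 ∧ ∀ i : Fin k,
      ((p.1 < i ∧ i < q.1) ∨ (q.1 < i ∧ i < p.1)) → ¬ ClassNonempty (M i p.2)))

/-- The cell graph of a general gridding matrix. -/
def genCellGraph {k l : ℕ} (M : Fin k → Fin l → PermClass) :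
    SimpleGraph (Fin k × Fin l) :=
  SimpleGraph.fromRel (GenCellAdj M)

/-- Unbounded horizontal path-width of a class. -/
def UnboundedHPW (C : PermClass) : Prop := ∀ K, ∃ n, ∃ π ∈ C n, K < hpw π

/-- Unbounded vertical path-width of a class. -/
def UnboundedVPW (C : PermClass) : Prop := ∀ K, ∃ n, ∃ π ∈ C n, K < vpw π

/-- `(p, q)` is a bumper. -/
def Bumper {k l : ℕ} (M : Fin k → Fin l → PermClass) (p q : Fin k × Fin l) : Prop :=
  (UnboundedHPW (M q.1 q.2) ∧ p.1 = q.1) ∨ (UnboundedVPW (M q.1 q.2) ∧ p.2 = q.2)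

/-- The cell graph of `M` contains a bumper-ended path. -/
def HasBumperEndedPath {k l : ℕ} (M : Fin k → Fin l → PermClass) : Prop :=
  ∃ (L : List (Fin k × Fin l)) (h : 2 ≤ L.length),
    List.Chain' (genCellGraph M).Adj L ∧ L.Nodup ∧
    Bumper M (L.get ⟨1, by omega⟩) (L.get ⟨0, by omega⟩) ∧
    Bumper M (L.get ⟨L.length - 2, by omega⟩) (L.get ⟨L.length - 1, by omega⟩)

/-- Horizontal alternation: all even entries (1-based values) precede all odd entries. -/
def IsHorizAlt {n : ℕ} (π : Equiv.Perm (Fin n)) : Prop :=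
  ∀ i j : Fin n, i < j → ¬(Odd ((π i).val + 1) ∧ Even ((π j).val + 1))

/-- `σ` is monotone on the positions satisfying `P`. -/
def MonOn {n : ℕ} (σ : Equiv.Perm (Fin n)) (P : Fin n → Prop) : Prop :=
  (∀ i j, i < j → P i → P j → σ i < σ j) ∨ (∀ i j, i < j → P i → P j → σ j < σ i)

/-- Monotone horizontal alternation. -/
def IsMonHorizAlt {n : ℕ} (σ : Equiv.Perm (Fin n)) : Prop :=
  IsHorizAlt σ ∧ MonOn σ (fun i => Odd ((σ i).val + 1)) ∧
    MonOn σ (fun i => Even ((σ i).val + 1))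

/-- The 1×2 horizontal monotone juxtaposition matrix. -/
def juxH (b₁ b₂ : Bool) : Fin 2 → Fin 1 → Option Bool :=
  fun i _ => some (if i = 0 then b₁ else b₂)

/-- No three consecutive cells of the list share a row or a column. -/
def ProperTurning {k l : ℕ} (L : List (Fin k × Fin l)) : Prop :=
  ∀ a b c : Fin k × Fin l, [a, b, c] <:+: L →
    ¬(a.1 = b.1 ∧ b.1 = c.1) ∧ ¬(a.2 = b.2 ∧ b.2 = c.2)

/-- The class of increasing (`true`) or decreasing (`false`) permutations. -/
def monClass (b : Bool) : PermClass :=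
  fun n => {π | ∀ i j : Fin n, i < j → (if b then π i < π j else π j < π i)}

end

end PPM

open PPM

/-!
A value `y` is a *pre-start* of a set `B` of values if `y ∉ B` but `y + 1 ∈ B`. Splitting off the
topmost run of `B` shows that `B` is a disjoint union of at most `#(pre-starts of B) + 1`
intervals. When `B` is the set of values of `π` at the positions in `[a, b]`, every pre-start of
`B` sits at a position left of `a` or right of `b`. If `ℓ` pre-starts `g₀ < ⋯ < g_{ℓ-1}` sit on
the same side, then among the values `g₀ < g₀ + 1 < g₁ < g₁ + 1 < ⋯` (the `gᵢ` outside `[a, b]`,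
the `gᵢ + 1` inside), a window of `ℓ` consecutive ones has all its odd-ranked members to the left
of all its even-ranked ones, which is a horizontal alternation of size `ℓ` contained in `π`.
So each side carries fewer than `ℓ` pre-starts, and the intervalicity is at most `2ℓ - 1`.
-/

namespace PPM

section Intervalicity

variable {n : ℕ}

def IsIntervalPartition (A : Finset (Fin n)) (F : Finset (Finset (Fin n))) : Prop :=
  (∀ I ∈ F, ∃ a b : Fin n, I = Finset.Icc a b) ∧
    (F : Set (Finset (Fin n))).PairwiseDisjoint id ∧ F.sup id = A

theorem intervalicity_le_card {A : Finset (Fin n)} {F : Finset (Finset (Fin n))}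
    (hF : IsIntervalPartition A F) : intervalicity A ≤ F.card :=
  Nat.sInf_le ⟨F, rfl, hF⟩

theorem isIntervalPartition_image_singleton (A : Finset (Fin n)) :
    IsIntervalPartition A (A.image singleton) := by
  refine ⟨?_, ?_, by rw [Finset.sup_image, Function.id_comp, Finset.sup_singleton_eq_self]⟩
  · simp only [Finset.mem_image]
    rintro _ ⟨x, -, rfl⟩
    exact ⟨x, x, (Finset.Icc_self x).symm⟩
  · simp only [Finset.coe_image]
    rintro _ ⟨x, -, rfl⟩ _ ⟨y, -, rfl⟩ hxy
    exact Finset.disjoint_singleton.2 fun h => hxy (congrArg _ h)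

theorem exists_isIntervalPartition_card_eq (A : Finset (Fin n)) :
    ∃ F, IsIntervalPartition A F ∧ F.card = intervalicity A := by
  obtain ⟨F, hcard, hF⟩ := Nat.sInf_mem (s := {m | ∃ F, F.card = m ∧ IsIntervalPartition A F})
    ⟨_, _, rfl, isIntervalPartition_image_singleton A⟩
  exact ⟨F, hF, hcard⟩

theorem intervalicity_empty : intervalicity (∅ : Finset (Fin n)) = 0 :=
  Nat.eq_zero_of_le_zero <| intervalicity_le_card (F := ∅) ⟨by simp, by simp, rfl⟩

theorem intervalicity_Icc_le_one (a b : Fin n) : intervalicity (Finset.Icc a b) ≤ 1 :=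
  intervalicity_le_card (F := {Finset.Icc a b}) ⟨by simp, by simp, by simp⟩

theorem intervalicity_union_le {A B : Finset (Fin n)} (hAB : Disjoint A B) :
    intervalicity (A ∪ B) ≤ intervalicity A + intervalicity B := by
  obtain ⟨F, ⟨hF, hFdisj, hFsup⟩, hFcard⟩ := exists_isIntervalPartition_card_eq A
  obtain ⟨G, ⟨hG, hGdisj, hGsup⟩, hGcard⟩ := exists_isIntervalPartition_card_eq B
  have hFA : ∀ I ∈ F, I ⊆ A := fun I hI => hFsup ▸ Finset.le_sup (f := id) hI
  have hGB : ∀ J ∈ G, J ⊆ B := fun J hJ => hGsup ▸ Finset.le_sup (f := id) hJ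
  calc intervalicity (A ∪ B) ≤ (F ∪ G).card := by
        refine intervalicity_le_card ⟨?_, ?_, by rw [Finset.sup_union, hFsup, hGsup]; rfl⟩
        · simpa only [Finset.mem_union] using fun I hI => hI.elim (hF I) (hG I)
        · rw [Finset.coe_union]
          exact hFdisj.union hGdisj fun I hI J hJ _ =>
            hAB.mono (hFA I hI) (hGB J hJ)
    _ ≤ intervalicity A + intervalicity B := hFcard ▸ hGcard ▸ Finset.card_union_le F G

end Intervalicity

section PreStarts

variable {n : ℕ}

def preStarts (B : Finset (Fin n)) : Finset (Fin n) :=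
  {y | y ∉ B ∧ Order.succ y ∈ B}

theorem mem_preStarts {B : Finset (Fin n)} {y : Fin n} :
    y ∈ preStarts B ↔ y ∉ B ∧ Order.succ y ∈ B := by
  simp [preStarts]

/-- Cutting `B` below a run start `c` removes the pre-start `pred c` and creates none. -/
theorem card_preStarts_filter_lt_lt {B : Finset (Fin n)} {c : Fin n} (hcB : c ∈ B)
    (hc : ¬IsMin c) (hpred : Order.pred c ∉ B) :
    (preStarts (B.filter (· < c))).card < (preStarts B).card := by
  have hmem : Order.pred c ∈ preStarts B :=
    mem_preStarts.2 ⟨hpred, (Order.succ_pred_of_not_isMin hc).symm ▸ hcB⟩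
  refine Finset.card_lt_card (lt_of_le_of_lt ?_ (Finset.erase_ssubset hmem))
  intro y hy
  obtain ⟨hyB', hsyB'⟩ := mem_preStarts.1 hy
  obtain ⟨hsyB, hsyc⟩ := Finset.mem_filter.1 hsyB'
  have hyc : y < c := (Order.le_succ y).trans_lt hsyc
  refine Finset.mem_erase.2 ⟨?_, mem_preStarts.2 ⟨fun hyB => hyB' ?_, hsyB⟩⟩
  · rintro rfl
    exact hsyc.ne (Order.succ_pred_of_not_isMin hc)
  · exact Finset.mem_filter.2 ⟨hyB, hyc⟩

theorem exists_eq_filter_lt_union_Icc {B : Finset (Fin n)} (hB : B.Nonempty) :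
    ∃ c ∈ B, B = B.filter (· < c) ∪ Finset.Icc c (B.max' hB) ∧
      (IsMin c ∨ Order.pred c ∉ B) := by
  set m := B.max' hB
  set T := B.filter (fun x => Finset.Icc x m ⊆ B)
  have hmB : m ∈ B := B.max'_mem hB
  have hT : T.Nonempty := ⟨m, Finset.mem_filter.2 ⟨hmB, by simpa using hmB⟩⟩
  obtain ⟨hcB, hcm⟩ := Finset.mem_filter.1 (T.min'_mem hT)
  refine ⟨T.min' hT, hcB, ?_, or_iff_not_imp_left.2 fun hc hpred => ?_⟩
  · ext x
    simp only [Finset.mem_union, Finset.mem_filter, Finset.mem_Icc]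
    refine ⟨fun hx => (lt_or_ge x _).imp (⟨hx, ·⟩) (⟨·, B.le_max' x hx⟩), ?_⟩
    rintro (⟨hx, -⟩ | hx)
    exacts [hx, hcm (Finset.mem_Icc.2 hx)]
  · have hpT : Order.pred (T.min' hT) ∈ T := by
      refine Finset.mem_filter.2 ⟨hpred, fun x hx => ?_⟩
      obtain ⟨hpx, hxm⟩ := Finset.mem_Icc.1 hx
      rcases hpx.eq_or_lt with rfl | hlt
      · exact hpred
      · exact hcm (Finset.mem_Icc.2 ⟨(Order.pred_lt_iff_of_not_isMin hc).1 hlt, hxm⟩)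
    exact (Order.pred_lt_of_not_isMin hc).not_ge (T.min'_le _ hpT)

theorem intervalicity_le_card_preStarts_add_one (B : Finset (Fin n)) :
    intervalicity B ≤ (preStarts B).card + 1 := by
  induction B using Finset.strongInduction with
  | H B ih =>
  rcases B.eq_empty_or_nonempty with rfl | hB
  · simp [intervalicity_empty]
  obtain ⟨c, hcB, hsplit, hc⟩ := exists_eq_filter_lt_union_Icc hB
  have hcut : intervalicity B ≤ intervalicity (B.filter (· < c)) + 1 := by
    have hdisj : Disjoint (B.filter (· < c)) (Finset.Icc c (B.max' hB)) :=
      Finset.disjoint_left.2 fun x hx hx' =>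
        (Finset.mem_filter.1 hx).2.not_ge (Finset.mem_Icc.1 hx').1
    calc intervalicity B = intervalicity (B.filter (· < c) ∪ Finset.Icc c (B.max' hB)) := by
          rw [← hsplit]
      _ ≤ intervalicity (B.filter (· < c)) + 1 :=
          (intervalicity_union_le hdisj).trans
            (Nat.add_le_add_left (intervalicity_Icc_le_one _ _) _)
  rcases hc with hc | hpred
  · have hempty : B.filter (· < c) = ∅ := Finset.filter_false_of_mem fun x _ => hc.not_lt
    rw [hempty, intervalicity_empty] at hcut
    omega
  · have hlt : B.filter (· < c) ⊂ B :=
      Finset.filter_ssubset.2 ⟨c, hcB, lt_irrefl c⟩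
    have hmin : ¬IsMin c := fun hc => hpred (by rwa [Order.pred_eq_iff_isMin.2 hc])
    have := ih _ hlt
    have := card_preStarts_filter_lt_lt hcB hmin hpred
    omega

end PreStarts

section Interleave

variable {α : Type*} [LinearOrder α] [SuccOrder α] {ℓ : ℕ}

def interleave (g : Fin ℓ → α) (k : Fin (2 * ℓ)) : α :=
  if Even (k : ℕ) then g ⟨k / 2, Nat.div_lt_of_lt_mul k.isLt⟩
  else Order.succ (g ⟨k / 2, Nat.div_lt_of_lt_mul k.isLt⟩)

variable {g : Fin ℓ → α}

theorem interleave_mem_of_even {s : Set α} (hg : ∀ i, g i ∈ s) {k : Fin (2 * ℓ)}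
    (hk : Even (k : ℕ)) : interleave g k ∈ s := by
  rw [interleave, if_pos hk]
  exact hg _

theorem interleave_mem_of_not_even {s : Set α} (hg : ∀ i, Order.succ (g i) ∈ s)
    {k : Fin (2 * ℓ)} (hk : ¬Even (k : ℕ)) : interleave g k ∈ s := by
  rw [interleave, if_neg hk]
  exact hg _

theorem strictMono_interleave {B : Set α} (hg : StrictMono g)
    (hgB : ∀ i, g i ∉ B ∧ Order.succ (g i) ∈ B) : StrictMono (interleave g) := by
  have hlt_succ : ∀ i, g i < Order.succ (g i) := fun i =>
    Order.lt_succ_of_not_isMax fun h => (hgB i).1 (h.succ_eq ▸ (hgB i).2)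
  have hsucc_lt : ∀ i j, i < j → Order.succ (g i) < g j := fun i j hij =>
    (Order.succ_le_of_lt (hg hij)).lt_of_ne fun h => (hgB j).1 (h ▸ (hgB i).2)
  have hle : ∀ k : Fin (2 * ℓ),
      interleave g k ≤ Order.succ (g ⟨k / 2, Nat.div_lt_of_lt_mul k.isLt⟩) :=
    fun k => by unfold interleave; split_ifs <;> simp [Order.le_succ]
  have hge : ∀ k : Fin (2 * ℓ), g ⟨k / 2, Nat.div_lt_of_lt_mul k.isLt⟩ ≤ interleave g k :=
    fun k => by unfold interleave; split_ifs <;> simp [Order.le_succ]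
  intro k k' hkk'
  have hval : (k : ℕ) < k' := hkk'
  rcases (Nat.div_le_div_right (c := 2) hval.le).lt_or_eq with hdiv | hdiv
  · exact (hle k).trans_lt ((hsucc_lt _ _ hdiv).trans_le (hge k'))
  · have hk : Even (k : ℕ) := by rw [Nat.even_iff]; omega
    have hk' : ¬Even (k' : ℕ) := by rw [Nat.even_iff]; omega
    simp only [interleave, if_pos hk, if_neg hk', hdiv]
    exact hlt_succ _

end Interleave

section PatternClass

variable {C : PermClass} {n ℓ : ℕ} {π : Equiv.Perm (Fin n)}

/-- The values `w` of `π` form a pattern `σ ∈ C`: read left to right, they have ranks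
`σ 0, σ 1, …`. -/
theorem IsPermClass.exists_mem_strictMono_symm_comp (hC : IsPermClass C) (hπ : π ∈ C n)
    {w : Fin ℓ → Fin n} (hw : StrictMono w) :
    ∃ σ ∈ C ℓ, StrictMono (π.symm ∘ w ∘ σ) := by
  set p := π.symm ∘ w
  have hp : StrictMono (p ∘ Tuple.sort p) := (Tuple.monotone_sort p).strictMono_of_injective
    ((π.symm.injective.comp hw.injective).comp (Tuple.sort p).injective)
  refine ⟨Tuple.sort p, hC π _ hπ ⟨p ∘ Tuple.sort p, hp, fun i j => ?_⟩, hp⟩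
  simp [p, hw.lt_iff_lt]

/-- Ranks are counted from `0`, so the odd-ranked values are the even entries of `IsHorizAlt`. -/
theorem IsPermClass.exists_isHorizAlt (hC : IsPermClass C) (hπ : π ∈ C n)
    {w : Fin ℓ → Fin n} (hw : StrictMono w)
    (hpos : ∀ r r' : Fin ℓ, Odd (r : ℕ) → Even (r' : ℕ) → π.symm (w r) < π.symm (w r')) :
    ∃ σ ∈ C ℓ, IsHorizAlt σ := by
  obtain ⟨σ, hσC, hσ⟩ := hC.exists_mem_strictMono_symm_comp hπ hw
  refine ⟨σ, hσC, fun i j hij ⟨hi, hj⟩ => (hσ hij).not_gt (hpos _ _ ?_ ?_)⟩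
  · exact Nat.not_even_iff_odd.1 (Nat.even_add_one.1 hj)
  · exact Nat.not_odd_iff_even.1 fun h => Nat.not_even_iff_odd.2 hi (h.add_one)

variable {B s : Finset (Fin n)}

theorem IsPermClass.exists_isHorizAlt_of_preStarts_left (hC : IsPermClass C) (hπ : π ∈ C n)
    (hs : s ⊆ preStarts B) (hpos : ∀ y ∈ s, ∀ z ∈ B, π.symm y < π.symm z) (hℓ : ℓ ≤ s.card) :
    ∃ σ ∈ C ℓ, IsHorizAlt σ := by
  set g := s.orderEmbOfCardLe hℓ
  have hgs : ∀ i, g i ∈ s := s.orderEmbOfCardLe_mem hℓ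
  have hgB : ∀ i, g i ∉ B ∧ Order.succ (g i) ∈ B := fun i => mem_preStarts.1 (hs (hgs i))
  refine hC.exists_isHorizAlt hπ (w := fun r => interleave g ⟨r + 1, by omega⟩)
    (fun r r' h => strictMono_interleave g.strictMono hgB (Fin.mk_lt_mk.2 (by simpa using h)))
    fun r r' hr hr' => hpos _ (interleave_mem_of_even hgs hr.add_one) _
      (interleave_mem_of_not_even (fun i => (hgB i).2) (by simpa [Nat.even_add_one] using hr'))

theorem IsPermClass.exists_isHorizAlt_of_preStarts_right (hC : IsPermClass C) (hπ : π ∈ C n)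
    (hs : s ⊆ preStarts B) (hpos : ∀ y ∈ s, ∀ z ∈ B, π.symm z < π.symm y) (hℓ : ℓ ≤ s.card) :
    ∃ σ ∈ C ℓ, IsHorizAlt σ := by
  set g := s.orderEmbOfCardLe hℓ
  have hgs : ∀ i, g i ∈ s := s.orderEmbOfCardLe_mem hℓ
  have hgB : ∀ i, g i ∉ B ∧ Order.succ (g i) ∈ B := fun i => mem_preStarts.1 (hs (hgs i))
  refine hC.exists_isHorizAlt hπ (w := fun r => interleave g ⟨r, by omega⟩)
    (fun r r' h => strictMono_interleave g.strictMono hgB (Fin.mk_lt_mk.2 h))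
    fun r r' hr hr' => hpos _ (interleave_mem_of_even hgs hr') _
      (interleave_mem_of_not_even (fun i => (hgB i).2) (Nat.not_even_iff_odd.2 hr))

end PatternClass

theorem mem_image_snd_filter_diagram {n : ℕ} (π : Equiv.Perm (Fin n)) (P : Fin n → Prop)
    [DecidablePred P] (y : Fin n) :
    y ∈ ((diagram π).filter (fun p => P p.1)).image Prod.snd ↔ P (π.symm y) := by
  simp only [diagram, Finset.mem_image, Finset.mem_filter, Finset.mem_univ, true_and]
  constructor
  · rintro ⟨_, ⟨⟨i, rfl⟩, hi⟩, rfl⟩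
    simpa using hi
  · exact fun hy => ⟨(π.symm y, y), ⟨⟨π.symm y, by simp⟩, hy⟩, rfl⟩

end PPM

/-- if `C` contains no horizontal alternation of size `ℓ`, then for any
`π ∈ C` and any interval of positions `I`, the y-projection of the points of `π`
with x-coordinate in `I` has intervalicity at most `2ℓ − 1`. -/
theorem intv_y_of_interval_le (C : PermClass) (hC : IsPermClass C) (ℓ : ℕ)
    (halt : ¬ ∃ π ∈ C ℓ, IsHorizAlt π) :
    ∀ (n : ℕ) (π : Equiv.Perm (Fin n)), π ∈ C n → ∀ a b : Fin n,
      intervalicity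
        (((diagram π).filter (fun p => a ≤ p.1 ∧ p.1 ≤ b)).image Prod.snd)
        ≤ 2 * ℓ - 1 := by
  intro n π hπ a b
  set B := ((diagram π).filter (fun p => a ≤ p.1 ∧ p.1 ≤ b)).image Prod.snd
  have hB : ∀ y, y ∈ B ↔ a ≤ π.symm y ∧ π.symm y ≤ b :=
    mem_image_snd_filter_diagram π (fun i => a ≤ i ∧ i ≤ b)
  set left := (preStarts B).filter (fun y => π.symm y < a)
  set right := (preStarts B).filter (fun y => ¬π.symm y < a)
  have hleft : left.card < ℓ := lt_of_not_ge fun h => halt <|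
    hC.exists_isHorizAlt_of_preStarts_left hπ (Finset.filter_subset _ _)
      (fun y hy z hz => (Finset.mem_filter.1 hy).2.trans_le ((hB z).1 hz).1) h
  have hright : right.card < ℓ := lt_of_not_ge fun h => halt <|
    hC.exists_isHorizAlt_of_preStarts_right hπ (Finset.filter_subset _ _)
      (fun y hy z hz => by
        obtain ⟨hyG, hya⟩ := Finset.mem_filter.1 hy
        have hyB : y ∉ B := (mem_preStarts.1 hyG).1
        rw [hB, not_and, not_le] at hyB
        exact ((hB z).1 hz).2.trans_lt (hyB (not_lt.1 hya))) h
  have hsplit : left.card + right.card = (preStarts B).card :=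
    Finset.card_filter_add_card_filter_not _
  have := intervalicity_le_card_preStarts_add_one B
  omega
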